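/- Fix Φ₁, Φ₂, Φ₃ ∈ [0, π). For r₁, r₂, r₃ > 0 define ℓ₁ = arcosh(cosh r₂ cosh r₃ + sinh r₂ sinh r₃ cos Φ₁), ℓ₂ = arcosh(cosh r₃ cosh r₁ + sinh r₃ sinh r₁ cos Φ₂), ℓ₃ = arcosh(cosh r₁ cosh r₂ + sinh r₁ sinh r₂ cos Φ₃), and define θ₁ = arccos((cosh ℓ₂ cosh ℓ₃ − cosh ℓ₁)/(sinh ℓ₂ sinh ℓ₃)), with θ₂, θ₃ defined by cyclic permutation of the indices. Suppose at the point (r₁, r₂, r₃) the lengths ℓ₁, ℓ₂, ℓ₃ satisfy the strict triangle inequalities. Then the partial derivatives satisfy the symmetry sinh(r₂) · ∂θ₁/∂r₂ = sinh(r₁) · ∂θ₂/∂r₁ (and similarly for the other pairs of indices). -/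

import Mathlib

/-!
Write `cᵢ = cosh ℓᵢ`. By the hyperbolic law of cosines `θᵢ` is a function of `c₁, c₂, c₃`, and
with `G = 1 - c₁² - c₂² - c₃² + 2 c₁ c₂ c₃`, which the strict triangle inequalities make positive,
`∂θᵢ/∂cᵢ = 1/√G` and `∂θᵢ/∂cₖ = -(cᵢ cₖ - cⱼ) / ((cₖ² - 1) √G)`.
Moving `rⱼ` changes only `cᵢ` and `cₖ` (`k` the third index), and
`sinh rⱼ · ∂cᵢ/∂rⱼ = cosh rⱼ · cᵢ - cosh rₖ`. Substituting, both `sinh rⱼ · ∂θᵢ/∂rⱼ` and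
`sinh rᵢ · ∂θⱼ/∂rᵢ` become a quotient by `√G (cₖ² - 1)` whose numerators agree identically.
-/

open Real

/-- The inverse hyperbolic cosine (on `[1, ∞)`). -/
noncomputable def arcosh (x : ℝ) : ℝ := Real.log (x + Real.sqrt (x ^ 2 - 1))

/-- The hyperbolic distance between the centers of the hyperbolic circles of radii
`r (i+1)` and `r (i+2)` meeting at exterior angle `Φ i` (indices mod 3). -/
noncomputable def ellH (Φ r : Fin 3 → ℝ) (i : Fin 3) : ℝ :=
  _root_.arcosh (Real.cosh (r (i + 1)) * Real.cosh (r (i + 2)) +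
    Real.sinh (r (i + 1)) * Real.sinh (r (i + 2)) * Real.cos (Φ i))

/-- The inner angle at the `i`-th vertex of the hyperbolic triangle with side lengths
`ellH Φ r`, via the hyperbolic law of cosines. -/
noncomputable def thetaH (Φ r : Fin 3 → ℝ) (i : Fin 3) : ℝ :=
  Real.arccos ((Real.cosh (ellH Φ r (i + 1)) * Real.cosh (ellH Φ r (i + 2)) -
      Real.cosh (ellH Φ r i)) /
    (Real.sinh (ellH Φ r (i + 1)) * Real.sinh (ellH Φ r (i + 2))))

open Topology

noncomputable def coshLen (φ ρ σ : ℝ) : ℝ :=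
  cosh ρ * cosh σ + sinh ρ * sinh σ * cos φ

noncomputable def hypAngle (a b c : ℝ) : ℝ :=
  arccos ((b * c - a) / (√(b ^ 2 - 1) * √(c ^ 2 - 1)))

/-- `det !![1, a, b; a, 1, c; b, c, 1]`; for the side cosh-lengths of a hyperbolic triangle it is
`(sinh ℓ₂ sinh ℓ₃ sin θ₁)²`. -/
def gramDet (a b c : ℝ) : ℝ :=
  1 - a ^ 2 - b ^ 2 - c ^ 2 + 2 * a * b * c

lemma coshLen_comm (φ ρ σ : ℝ) : coshLen φ ρ σ = coshLen φ σ ρ := by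
  unfold coshLen; ring

lemma one_le_coshLen (φ : ℝ) {ρ σ : ℝ} (hρ : 0 ≤ ρ) (hσ : 0 ≤ σ) : 1 ≤ coshLen φ ρ σ := by
  have hsinh : 0 ≤ sinh ρ * sinh σ := mul_nonneg (sinh_nonneg_iff.2 hρ) (sinh_nonneg_iff.2 hσ)
  have := one_le_cosh (ρ - σ)
  rw [cosh_sub] at this
  unfold coshLen
  nlinarith [neg_one_le_cos φ]

lemma hasDerivAt_coshLen (φ σ : ℝ) {ρ : ℝ} (hρ : ρ ≠ 0) :
    HasDerivAt (fun x => coshLen φ x σ) ((cosh ρ * coshLen φ ρ σ - cosh σ) / sinh ρ) ρ := by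
  have h : HasDerivAt (fun x => coshLen φ x σ) (sinh ρ * cosh σ + cosh ρ * sinh σ * cos φ) ρ :=
    ((hasDerivAt_cosh ρ).mul_const (cosh σ)).add
      (((hasDerivAt_sinh ρ).mul_const (sinh σ)).mul_const (cos φ))
  refine h.congr_deriv ?_
  rw [eq_div_iff (sinh_ne_zero.2 hρ)]
  unfold coshLen
  linear_combination (-cosh σ) * cosh_sq_sub_sinh_sq ρ

lemma hypAngle_comm (a b c : ℝ) : hypAngle a b c = hypAngle a c b := by
  unfold hypAngle; rw [mul_comm b, mul_comm √(b ^ 2 - 1)]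

lemma gramDet_comm (a b c : ℝ) : gramDet a b c = gramDet b a c := by
  unfold gramDet; ring

lemma gramDet_cosh_pos {l₁ l₂ l₃ : ℝ} (h₁ : l₁ < l₂ + l₃) (h₂ : l₂ < l₃ + l₁) (h₃ : l₃ < l₁ + l₂) :
    0 < gramDet (cosh l₁) (cosh l₂) (cosh l₃) := by
  have hfactor : gramDet (cosh l₁) (cosh l₂) (cosh l₃) =
      (cosh (l₂ + l₃) - cosh l₁) * (cosh l₁ - cosh (l₂ - l₃)) := by
    rw [cosh_add, cosh_sub]
    unfold gramDet
    linear_combination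
      (cosh l₃ ^ 2 - 1) * cosh_sq_sub_sinh_sq l₂ + sinh l₂ ^ 2 * cosh_sq_sub_sinh_sq l₃
  have hl₁ : 0 < l₁ := by linarith
  have hlt₁ : cosh l₁ < cosh (l₂ + l₃) := by
    rw [cosh_lt_cosh, abs_of_pos hl₁, abs_of_pos (by linarith)]; exact h₁
  have hlt₂ : cosh (l₂ - l₃) < cosh l₁ := by
    rw [cosh_lt_cosh, abs_of_pos hl₁, abs_lt]; constructor <;> linarith
  rw [hfactor]
  exact mul_pos (by linarith) (by linarith)

lemma hasDerivAt_hypAngle {p q : ℝ → ℝ} {p' q' b x : ℝ} (hp : HasDerivAt p p' x)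
    (hq : HasDerivAt q q' x) (hb : 1 ≤ b) (hqx : 1 ≤ q x) (hG : 0 < gramDet (p x) b (q x)) :
    HasDerivAt (fun y => hypAngle (p y) b (q y))
      ((p' * (q x ^ 2 - 1) - q' * (p x * q x - b)) /
        (√(gramDet (p x) b (q x)) * (q x ^ 2 - 1))) x := by
  set G := gramDet (p x) b (q x)
  have hgram : (b ^ 2 - 1) * (q x ^ 2 - 1) = G + (b * q x - p x) ^ 2 := by
    simp only [G, gramDet]; ring
  have hprod : 0 < (b ^ 2 - 1) * (q x ^ 2 - 1) := by nlinarith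
  have hb₁ : 0 < b ^ 2 - 1 := lt_of_le_of_ne (by nlinarith) (left_ne_zero_of_mul hprod.ne').symm
  have hq₁ : 0 < q x ^ 2 - 1 := lt_of_le_of_ne (by nlinarith) (right_ne_zero_of_mul hprod.ne').symm
  set U := √(b ^ 2 - 1)
  set W := √(q x ^ 2 - 1)
  have hU : 0 < U := sqrt_pos.2 hb₁
  have hW : 0 < W := sqrt_pos.2 hq₁
  have hU2 : U ^ 2 = b ^ 2 - 1 := sq_sqrt hb₁.le
  have hW2 : W ^ 2 = q x ^ 2 - 1 := sq_sqrt hq₁.le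
  have hden : HasDerivAt (fun y => U * √(q y ^ 2 - 1)) (U * (2 * q x * q' / (2 * W))) x := by
    have hsq : HasDerivAt (fun y => q y ^ 2 - 1) (2 * q x * q') x := by
      simpa using (hq.pow 2).sub_const 1
    exact (hsq.sqrt hq₁.ne').const_mul U
  have hF := ((hq.const_mul b).sub hp).div hden (by positivity)
  set F := (b * q x - p x) / (U * W)
  have hone_sub : 1 - F ^ 2 = (√G / (U * W)) ^ 2 := by
    rw [div_pow, div_pow, sq_sqrt hG.le, mul_pow, hU2, hW2, eq_div_iff hprod.ne', hgram]
    field_simp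
    ring
  have hF_sq : F ^ 2 < 1 := by nlinarith [sq_pos_of_pos (div_pos (sqrt_pos.2 hG) (mul_pos hU hW))]
  have hF₁ : F ≠ -1 := by rintro hF; rw [hF] at hF_sq; norm_num at hF_sq
  have hF₂ : F ≠ 1 := by rintro hF; rw [hF] at hF_sq; norm_num at hF_sq
  refine ((hasDerivAt_arccos hF₁ hF₂).comp x hF).congr_deriv ?_
  rw [hone_sub, sqrt_sq (by positivity), Pi.sub_apply]
  field_simp
  rw [show √(q x ^ 2 - 1) = W from rfl]
  linear_combination (q' * (q x * p x - b) - (q x ^ 2 - 1) * b * q') * hW2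

section Triangle

variable {Φ r : Fin 3 → ℝ}

lemma cosh_ellH (hr : ∀ m, 0 ≤ r m) (i : Fin 3) :
    cosh (ellH Φ r i) = coshLen (Φ i) (r (i + 1)) (r (i + 2)) :=
  cosh_arcosh (one_le_coshLen _ (hr _) (hr _))

lemma sinh_ellH (hr : ∀ m, 0 ≤ r m) (i : Fin 3) :
    sinh (ellH Φ r i) = √(coshLen (Φ i) (r (i + 1)) (r (i + 2)) ^ 2 - 1) :=
  sinh_arcosh (one_le_coshLen _ (hr _) (hr _))

lemma thetaH_eq_hypAngle (hr : ∀ m, 0 ≤ r m) (i : Fin 3) :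
    thetaH Φ r i = hypAngle (coshLen (Φ i) (r (i + 1)) (r (i + 2)))
      (coshLen (Φ (i + 1)) (r (i + 2)) (r i)) (coshLen (Φ (i + 2)) (r i) (r (i + 1))) := by
  rw [thetaH, hypAngle, cosh_ellH hr, cosh_ellH hr, cosh_ellH hr, sinh_ellH hr, sinh_ellH hr]
  simp [add_assoc]

lemma gramDet_coshLen_pos (hr : ∀ m, 0 ≤ r m)
    (htri : ∀ i, ellH Φ r i < ellH Φ r (i + 1) + ellH Φ r (i + 2)) (i : Fin 3) :
    0 < gramDet (coshLen (Φ i) (r (i + 1)) (r (i + 2)))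
      (coshLen (Φ (i + 1)) (r (i + 2)) (r i)) (coshLen (Φ (i + 2)) (r i) (r (i + 1))) := by
  have h := gramDet_cosh_pos (htri i) (by simpa [add_assoc] using htri (i + 1))
    (by simpa [add_assoc] using htri (i + 2))
  rw [cosh_ellH hr, cosh_ellH hr, cosh_ellH hr] at h
  simpa [add_assoc] using h

lemma thetaH_update_succ (hr : ∀ m, 0 ≤ r m) {x : ℝ} (hx : 0 ≤ x) (i : Fin 3) :
    thetaH Φ (Function.update r (i + 1) x) i = hypAngle (coshLen (Φ i) x (r (i + 2)))
      (coshLen (Φ (i + 1)) (r (i + 2)) (r i)) (coshLen (Φ (i + 2)) x (r i)) := by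
  rw [thetaH_eq_hypAngle ((Function.forall_update_iff r fun _ y => 0 ≤ y).2 ⟨hx, fun m _ => hr m⟩)]
  simp [coshLen_comm _ (r i) x]

lemma thetaH_succ_update (hr : ∀ m, 0 ≤ r m) {x : ℝ} (hx : 0 ≤ x) (i : Fin 3) :
    thetaH Φ (Function.update r i x) (i + 1) = hypAngle (coshLen (Φ (i + 1)) x (r (i + 2)))
      (coshLen (Φ i) (r (i + 1)) (r (i + 2))) (coshLen (Φ (i + 2)) x (r (i + 1))) := by
  rw [thetaH_eq_hypAngle ((Function.forall_update_iff r fun _ y => 0 ≤ y).2 ⟨hx, fun m _ => hr m⟩)]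
  simp [add_assoc, coshLen_comm _ (r (i + 2)) x, hypAngle_comm (coshLen (Φ (i + 1)) _ _)]

end Triangle

lemma sinh_mul_deriv_hypAngle_symm {φ₀ φ₁ φ₂ ρ₀ ρ₁ ρ₂ : ℝ} (h₀ : 0 < ρ₀) (h₁ : 0 < ρ₁) (h₂ : 0 ≤ ρ₂)
    (hG : 0 < gramDet (coshLen φ₀ ρ₁ ρ₂) (coshLen φ₁ ρ₂ ρ₀) (coshLen φ₂ ρ₀ ρ₁)) :
    sinh ρ₁ * deriv (fun x => hypAngle (coshLen φ₀ x ρ₂) (coshLen φ₁ ρ₂ ρ₀) (coshLen φ₂ x ρ₀)) ρ₁ =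
      sinh ρ₀ *
        deriv (fun x => hypAngle (coshLen φ₁ x ρ₂) (coshLen φ₀ ρ₁ ρ₂) (coshLen φ₂ x ρ₁)) ρ₀ := by
  rw [coshLen_comm φ₁ ρ₂ ρ₀]
  have hGL : 0 < gramDet (coshLen φ₀ ρ₁ ρ₂) (coshLen φ₁ ρ₀ ρ₂) (coshLen φ₂ ρ₁ ρ₀) := by
    rwa [coshLen_comm φ₁ ρ₀, coshLen_comm φ₂ ρ₁]
  have hGR : 0 < gramDet (coshLen φ₁ ρ₀ ρ₂) (coshLen φ₀ ρ₁ ρ₂) (coshLen φ₂ ρ₀ ρ₁) := by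
    rwa [gramDet_comm, coshLen_comm φ₁ ρ₀]
  have hL := hasDerivAt_hypAngle (hasDerivAt_coshLen φ₀ ρ₂ h₁.ne')
    (hasDerivAt_coshLen φ₂ ρ₀ h₁.ne') (one_le_coshLen _ h₀.le h₂) (one_le_coshLen _ h₁.le h₀.le) hGL
  have hR := hasDerivAt_hypAngle (hasDerivAt_coshLen φ₁ ρ₂ h₀.ne')
    (hasDerivAt_coshLen φ₂ ρ₁ h₀.ne') (one_le_coshLen _ h₁.le h₂) (one_le_coshLen _ h₀.le h₁.le) hGR
  rw [hL.deriv, hR.deriv, coshLen_comm φ₂ ρ₀ ρ₁, gramDet_comm]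
  have hs₀ : sinh ρ₀ ≠ 0 := sinh_ne_zero.2 h₀.ne'
  have hs₁ : sinh ρ₁ ≠ 0 := sinh_ne_zero.2 h₁.ne'
  rw [← mul_div_assoc, ← mul_div_assoc]
  congr 1
  field_simp
  ring

lemma sinh_mul_deriv_thetaH_succ {Φ r : Fin 3 → ℝ} (hr : ∀ m, 0 < r m)
    (htri : ∀ i, ellH Φ r i < ellH Φ r (i + 1) + ellH Φ r (i + 2)) (i : Fin 3) :
    sinh (r (i + 1)) * deriv (fun x => thetaH Φ (Function.update r (i + 1) x) i) (r (i + 1)) =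
      sinh (r i) * deriv (fun x => thetaH Φ (Function.update r i x) (i + 1)) (r i) := by
  have hr' : ∀ m, 0 ≤ r m := fun m => (hr m).le
  have hL : (fun x => thetaH Φ (Function.update r (i + 1) x) i) =ᶠ[𝓝 (r (i + 1))]
      fun x => hypAngle (coshLen (Φ i) x (r (i + 2))) (coshLen (Φ (i + 1)) (r (i + 2)) (r i))
        (coshLen (Φ (i + 2)) x (r i)) :=
    (eventually_ge_nhds (hr (i + 1))).mono fun _ hx => thetaH_update_succ hr' hx i
  have hR : (fun x => thetaH Φ (Function.update r i x) (i + 1)) =ᶠ[𝓝 (r i)]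
      fun x => hypAngle (coshLen (Φ (i + 1)) x (r (i + 2))) (coshLen (Φ i) (r (i + 1)) (r (i + 2)))
        (coshLen (Φ (i + 2)) x (r (i + 1))) :=
    (eventually_ge_nhds (hr i)).mono fun _ hx => thetaH_succ_update hr' hx i
  rw [hL.deriv_eq, hR.deriv_eq]
  exact sinh_mul_deriv_hypAngle_symm (hr i) (hr (i + 1)) (hr' (i + 2))
    (gramDet_coshLen_pos hr' htri i)

theorem hyperbolic_deriv_symm_general
    (Φ r : Fin 3 → ℝ)
    (hr : ∀ i, 0 < r i)
    (htri : ∀ i, ellH Φ r i < ellH Φ r (i + 1) + ellH Φ r (i + 2)) :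
    ∀ i j : Fin 3, i ≠ j →
      Real.sinh (r j) * deriv (fun x => thetaH Φ (Function.update r j x) i) (r j) =
      Real.sinh (r i) * deriv (fun x => thetaH Φ (Function.update r i x) j) (r i) := by
  intro i j hij
  rcases (by decide : ∀ i j : Fin 3, i ≠ j → j = i + 1 ∨ i = j + 1) i j hij with rfl | rfl
  · exact sinh_mul_deriv_thetaH_succ hr htri i
  · exact (sinh_mul_deriv_thetaH_succ hr htri j).symm

/-- Lemma 2.3 in the hyperbolic background geometry:
`sinh (r j) · ∂θ i / ∂r j = sinh (r i) · ∂θ j / ∂r i` for all pairs of distinct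
indices `i, j`. -/
theorem hyperbolic_deriv_symm
    (Φ r : Fin 3 → ℝ)
    (hΦ : ∀ i, Φ i ∈ Set.Ico 0 π)
    (hr : ∀ i, 0 < r i)
    (htri : ∀ i, ellH Φ r i < ellH Φ r (i + 1) + ellH Φ r (i + 2)) :
    ∀ i j : Fin 3, i ≠ j →
      Real.sinh (r j) * deriv (fun x => thetaH Φ (Function.update r j x) i) (r j) =
      Real.sinh (r i) * deriv (fun x => thetaH Φ (Function.update r i x) j) (r i) :=
  hyperbolic_deriv_symm_general Φ r hr htri
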